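/- Let X be a topological space with |X| ≤ 2^{ℵ₀}, and suppose there exists a complete π-base Souslin scheme on X that covers X. Then there exists a complete π-base Souslin scheme on X that covers X and has a selector. -/
import Mathlib


open Set Topology

namespace PiSpacePaper

/-- The restriction `p↾n` of `p : ℕ → ℕ`, as a list of length `n`. -/
def restrictSeq (p : ℕ → ℕ) (n : ℕ) : List ℕ := (List.range n).map p

/-- The basic clopen set `S_a` of the Baire space. -/
def cyl (a : List ℕ) : Set (ℕ → ℕ) := {p | restrictSeq p a.length = a}

/-- The fruit `⋂ n, V (p↾n)` of a branch `p` in a Souslin scheme `V`. -/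
def fruit {X : Type*} (V : List ℕ → Set X) (p : ℕ → ℕ) : Set X :=
  ⋂ n : ℕ, V (restrictSeq p n)

/-- A Souslin scheme `V` covers the set `s`. -/
def Covers {X : Type*} (V : List ℕ → Set X) (s : Set X) : Prop :=
  V [] = s ∧ ∀ a : List ℕ, V a = ⋃ n : ℕ, V (a ++ [n])

/-- A Souslin scheme `V` partitions the set `s`. -/
def Partitions {X : Type*} (V : List ℕ → Set X) (s : Set X) : Prop :=
  Covers V s ∧ ∀ (a : List ℕ) (n m : ℕ), n ≠ m → V (a ++ [n]) ∩ V (a ++ [m]) = ∅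

/-- A Souslin scheme is complete iff all fruits are nonempty. -/
def Complete {X : Type*} (V : List ℕ → Set X) : Prop :=
  ∀ p : ℕ → ℕ, (fruit V p).Nonempty

/-- A Souslin scheme has strict branches iff every fruit is a singleton. -/
def StrictBranches {X : Type*} (V : List ℕ → Set X) : Prop :=
  ∀ p : ℕ → ℕ, ∃ x : X, fruit V p = {x}

/-- A Souslin scheme is open iff all its members are open sets. -/
def OpenScheme {X : Type*} [TopologicalSpace X] (V : List ℕ → Set X) : Prop :=
  ∀ a : List ℕ, IsOpen (V a)

/-- `flesh V = ⋃ a, V a`. -/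
def flesh {X : Type*} (V : List ℕ → Set X) : Set X := ⋃ a : List ℕ, V a

/-- `branches V x = {q ∈ ℕ^ℕ : x ∈ fruit V q}`. -/
def branches {X : Type*} (V : List ℕ → Set X) (x : X) : Set (ℕ → ℕ) :=
  {q | x ∈ fruit V q}

/-- A family `γ` of subsets is a π-net for a space: all members are nonempty and every
nonempty open set contains a member. -/
def IsPiNet {X : Type*} [TopologicalSpace X] (γ : Set (Set X)) : Prop :=
  (∀ G ∈ γ, G.Nonempty) ∧
  ∀ U : Set X, IsOpen U → U.Nonempty → ∃ G ∈ γ, G ⊆ U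

/-- A family `γ` of subsets is a π-base for a space: all members are nonempty open sets
and every nonempty open set contains a member. -/
def IsPiBase {X : Type*} [TopologicalSpace X] (γ : Set (Set X)) : Prop :=
  (∀ G ∈ γ, IsOpen G ∧ G.Nonempty) ∧
  ∀ U : Set X, IsOpen U → U.Nonempty → ∃ G ∈ γ, G ⊆ U

/-- A π-space: there is an open Souslin scheme that partitions the space, has strict
branches, and whose family of members is a π-base. -/
def IsPiSpace (X : Type*) [TopologicalSpace X] : Prop :=
  ∃ V : List ℕ → Set X, OpenScheme V ∧ Partitions V Set.univ ∧ StrictBranches V ∧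
    IsPiBase {S : Set X | ∃ a : List ℕ, S = V a}

/-- A Lusin π-base for a space. -/
def IsLusinPiBase {X : Type*} [TopologicalSpace X] (V : List ℕ → Set X) : Prop :=
  OpenScheme V ∧ Partitions V Set.univ ∧ StrictBranches V ∧
  ∀ (x : X) (U : Set X), IsOpen U → x ∈ U →
    ∃ (a : List ℕ) (n : ℕ), x ∈ V a ∧ (⋃ i : ℕ, ⋃ _ : n ≤ i, V (a ++ [i])) ⊆ U

/-- A map is quasi-open iff the image of every nonempty open set has nonempty interior. -/
def IsQuasiOpen {X Y : Type*} [TopologicalSpace X] [TopologicalSpace Y] (f : X → Y) : Prop :=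
  ∀ U : Set X, IsOpen U → U.Nonempty → (interior (f '' U)).Nonempty

/-- A π-net Souslin scheme on a space `X`: for every finite sequence `a`, the family
`{V b : b ⊒ a}` is a π-net for the subspace `V a` of `X` (whose nonempty open sets are
exactly the nonempty sets `U ∩ V a` with `U` open in `X`). -/
def IsPiNetScheme {X : Type*} [TopologicalSpace X] (V : List ℕ → Set X) : Prop :=
  ∀ a : List ℕ,
    (∀ b : List ℕ, a <+: b → (V b).Nonempty) ∧
    ∀ U : Set X, IsOpen U → (U ∩ V a).Nonempty → ∃ b : List ℕ, a <+: b ∧ V b ⊆ U ∩ V a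

/-- A π-base Souslin scheme on a space is an open π-net Souslin scheme. -/
def IsPiBaseScheme {X : Type*} [TopologicalSpace X] (V : List ℕ → Set X) : Prop :=
  OpenScheme V ∧ IsPiNetScheme V

/-- A selector on a Souslin scheme `V`: a surjection of the Baire space onto `flesh V`
such that every fiber `f⁻¹(x)` is a dense subset of the subspace `branches V x` of the
Baire space. -/
def IsSelector {X : Type*} (V : List ℕ → Set X) (f : (ℕ → ℕ) → X) : Prop :=
  Set.range f = flesh V ∧
  ∀ x ∈ flesh V, f ⁻¹' {x} ⊆ branches V x ∧ branches V x ⊆ closure (f ⁻¹' {x})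

/-- The topology `σ_{τ,f}` on the Baire space, generated by the subbase consisting of the
`τ`-preimages under `f` together with the basic sets `S_a`. -/
def sigmaTop {X : Type*} [TopologicalSpace X] (f : (ℕ → ℕ) → X) :
    TopologicalSpace (ℕ → ℕ) :=
  TopologicalSpace.generateFrom
    ({S : Set (ℕ → ℕ) | ∃ U : Set X, IsOpen U ∧ S = f ⁻¹' U} ∪
      {S : Set (ℕ → ℕ) | ∃ a : List ℕ, S = cyl a})

/-- The Souslin scheme `V^g`, where `V^g_a = V_{g ∘ a}`. -/
def schemeComp {X : Type*} (V : List ℕ → Set X) (g : ℕ → ℕ) : List ℕ → Set X :=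
  fun a => V (a.map g)

/-- A subset of the Baire space is dense-in-itself iff it has no isolated points. -/
def DenseInItself (B : Set (ℕ → ℕ)) : Prop :=
  ∀ q ∈ B, q ∈ closure (B \ {q})

/-- `X` is a continuous open image of a π-space. -/
def IsContinuousOpenImageOfPiSpace (X : Type) [TopologicalSpace X] : Prop :=
  ∃ (Y : Type) (_ : TopologicalSpace Y) (f : Y → X),
    IsPiSpace Y ∧ Continuous f ∧ IsOpenMap f ∧ Function.Surjective f

/-- The topology `τ_N` on the Baire space generated by the sets `U \ A` with `U` open in
the Baire space and `A` nowhere dense in the Baire space. -/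
def tauN : TopologicalSpace (ℕ → ℕ) :=
  TopologicalSpace.generateFrom
    {S : Set (ℕ → ℕ) | ∃ U A : Set (ℕ → ℕ), IsOpen U ∧ IsNowhereDense A ∧ S = U \ A}

section AuxForStatement17

variable {X : Type} [TopologicalSpace X]

/-- Keep the entries at even positions of a list. -/
def ev : List ℕ → List ℕ
  | [] => []
  | [x] => [x]
  | x :: _ :: l => x :: ev l

lemma ev_append (a : List ℕ) (n : ℕ) :
    ev (a ++ [n]) = if Even a.length then ev a ++ [n] else ev a := by
  induction a using ev.induct with
  | case1 => simp [ev]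
  | case2 x => simp [ev]
  | case3 x y l ih =>
    simp only [List.cons_append, ev, List.length_cons, List.append_eq]
    by_cases h : Even l.length
    · rw [if_pos (by simpa [Nat.even_add_one] using h), ih, if_pos h]
    · rw [if_neg (by simpa [Nat.even_add_one] using h), ih, if_neg h]

lemma restrictSeq_succ (p : ℕ → ℕ) (n : ℕ) :
    restrictSeq p (n + 1) = restrictSeq p n ++ [p n] := by
  simp [restrictSeq, List.range_succ]

@[simp] lemma restrictSeq_length (p : ℕ → ℕ) (n : ℕ) : (restrictSeq p n).length = n := by
  simp [restrictSeq]

@[simp] lemma restrictSeq_zero (p : ℕ → ℕ) : restrictSeq p 0 = [] := rfl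

lemma ev_restrict (p : ℕ → ℕ) (k : ℕ) :
    ev (restrictSeq p (2 * k)) = restrictSeq (fun i => p (2 * i)) k := by
  induction k with
  | zero => simp [ev]
  | succ k ih =>
    have h1 : 2 * (k + 1) = (2 * k + 1) + 1 := by ring
    rw [h1, restrictSeq_succ, ev_append, if_neg (by simp [Nat.even_add_one]),
      restrictSeq_succ, ev_append, if_pos (by simp), ih]
    simp [restrictSeq_succ]

def padE : List ℕ → List ℕ
  | [] => []
  | x :: l => x :: 0 :: padE l

lemma ev_append_padE (c : List ℕ) : ∀ a : List ℕ, Even a.length →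
    ev (a ++ padE c) = ev a ++ c := by
  induction c with
  | nil => intro a _; simp [padE]
  | cons x c ih =>
    intro a ha
    have h1 : a ++ padE (x :: c) = (a ++ [x, 0]) ++ padE c := by simp [padE]
    have h2 : ev (a ++ [x, 0]) = ev a ++ [x] := by
      have h3 : a ++ [x, 0] = (a ++ [x]) ++ [0] := by simp
      rw [h3, ev_append, if_neg (by simp [Nat.even_add_one, ha]), ev_append, if_pos ha]
    rw [h1, ih _ (by simp [Nat.even_add] at *; simpa using ha), h2]
    simp

lemma covers_step {V : List ℕ → Set X} {s : Set X} (hC : Covers V s) (a : List ℕ) (n : ℕ) :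
    V (a ++ [n]) ⊆ V a := by
  intro x hx
  rw [hC.2 a]
  exact Set.mem_iUnion.2 ⟨n, hx⟩

lemma covers_restrict_anti {V : List ℕ → Set X} {s : Set X} (hC : Covers V s) (p : ℕ → ℕ)
    {m n : ℕ} (h : m ≤ n) : V (restrictSeq p n) ⊆ V (restrictSeq p m) := by
  induction h with
  | refl => exact subset_rfl
  | step hk ih =>
    rename_i k
    have h1 : V (restrictSeq p (k + 1)) ⊆ V (restrictSeq p k) := by
      rw [restrictSeq_succ]; exact covers_step hC _ _
    exact h1.trans ih

lemma covers_ev {V : List ℕ → Set X} (hC : Covers V Set.univ) :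
    Covers (fun a => V (ev a)) Set.univ := by
  constructor
  · exact hC.1
  · intro a
    by_cases h : Even a.length
    · simp only [ev_append, if_pos h]
      exact hC.2 (ev a)
    · simp only [ev_append, if_neg h, Set.iUnion_const]

lemma fruit_ev {V : List ℕ → Set X} (hC : Covers V Set.univ) (p : ℕ → ℕ) :
    fruit (fun a => V (ev a)) p = fruit V (fun i => p (2 * i)) := by
  apply subset_antisymm
  · intro x hx
    apply Set.mem_iInter.2
    intro k
    have h1 := Set.mem_iInter.1 hx (2 * k)
    simpa [ev_restrict] using h1
  · intro x hx
    apply Set.mem_iInter.2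
    intro n
    have h1 : x ∈ V (ev (restrictSeq p (2 * n))) := by
      rw [ev_restrict]
      exact Set.mem_iInter.1 hx n
    exact covers_restrict_anti (covers_ev hC) p (Nat.le_mul_of_pos_left n two_pos) h1

lemma pinet_ev {V : List ℕ → Set X} (hN : IsPiNetScheme V) :
    IsPiNetScheme (fun a => V (ev a)) := by
  intro a
  constructor
  · intro b _
    exact ((hN (ev b)).1 (ev b) List.prefix_rfl)
  · intro U hU hne
    obtain ⟨b', hpre, hsub⟩ := (hN (ev a)).2 U hU hne
    obtain ⟨c, rfl⟩ := hpre
    refine ⟨a ++ (if Even a.length then padE c else 0 :: padE c), ⟨_, rfl⟩, ?_⟩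
    have hev : ev (a ++ (if Even a.length then padE c else 0 :: padE c)) = ev a ++ c := by
      split_ifs with h
      · exact ev_append_padE c a h
      · have h1 : a ++ (0 :: padE c) = (a ++ [0]) ++ padE c := by simp
        have h2 : ev (a ++ [0]) = ev a := by rw [ev_append, if_neg h]
        rw [h1, ev_append_padE c _ (by simp [Nat.even_add_one, h]), h2]
    simpa [hev] using hsub

noncomputable def chainAux (V : List ℕ → Set X) (x : X)
    (step : ∀ a : List ℕ, x ∈ V a → ∃ n, x ∈ V (a ++ [n])) (h0 : x ∈ V []) :
    (n : ℕ) → {a : List ℕ // x ∈ V a}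
  | 0 => ⟨[], h0⟩
  | n + 1 =>
    let p := chainAux V x step h0 n
    ⟨p.1 ++ [(step p.1 p.2).choose], (step p.1 p.2).choose_spec⟩

lemma exists_branch {V : List ℕ → Set X} (hC : Covers V Set.univ) (x : X) :
    ∃ q : ℕ → ℕ, x ∈ fruit V q := by
  have h0 : x ∈ V [] := by rw [hC.1]; trivial
  have step : ∀ a : List ℕ, x ∈ V a → ∃ n, x ∈ V (a ++ [n]) := by
    intro a hx
    rw [hC.2 a] at hx
    exact Set.mem_iUnion.1 hx
  set F := chainAux V x step h0 with hF
  refine ⟨fun n => (step (F n).1 (F n).2).choose, ?_⟩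
  have key : ∀ n, restrictSeq (fun n => (step (F n).1 (F n).2).choose) n = (F n).1 := by
    intro n
    induction n with
    | zero => simp only [restrictSeq_zero, hF]; rfl
    | succ n ih =>
      rw [restrictSeq_succ, ih]
      rfl
  exact Set.mem_iInter.2 fun n => by rw [key n]; exact (F n).2

def E0 : Setoid (ℕ → ℕ) where
  r r s := ∃ N, ∀ n, N ≤ n → r n = s n
  iseqv := ⟨fun _ => ⟨0, fun _ _ => rfl⟩,
    fun ⟨N, h⟩ => ⟨N, fun n hn => (h n hn).symm⟩,
    fun ⟨N, h⟩ ⟨M, g⟩ => ⟨max N M, fun n hn =>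
      (h n (le_trans (le_max_left _ _) hn)).trans (g n (le_trans (le_max_right _ _) hn))⟩⟩

lemma exists_E0_surjection (Y : Type) [Nonempty Y] (hcard : Cardinal.mk Y ≤ Cardinal.continuum) :
    ∃ c : (ℕ → ℕ) → Y, Function.Surjective c ∧
      ∀ r s : ℕ → ℕ, (∃ N, ∀ n, N ≤ n → r n = s n) → c r = c s := by
  classical
  have hinj : Function.Injective
      (fun r : ℕ → ℕ => Quotient.mk E0 (fun n => Encodable.encode (restrictSeq r n))) := by
    intro r s hrs
    have hrel : E0.r (fun n => Encodable.encode (restrictSeq r n))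
        (fun n => Encodable.encode (restrictSeq s n)) := Quotient.exact hrs
    obtain ⟨N, hN⟩ := hrel
    funext i
    have hn : N ≤ max N (i + 1) := le_max_left _ _
    have h1 : restrictSeq r (max N (i + 1)) = restrictSeq s (max N (i + 1)) :=
      Encodable.encode_injective (hN _ hn)
    have h2 : ∀ j ∈ List.range (max N (i + 1)), r j = s j := by
      rw [← List.map_inj_left]
      exact h1
    exact h2 i (List.mem_range.2 (lt_of_lt_of_le (Nat.lt_succ_self i) (le_max_right _ _)))
  have hle : Cardinal.mk Y ≤ Cardinal.mk (Quotient E0) := by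
    have h1 : Cardinal.mk (ℕ → ℕ) = Cardinal.continuum := by
      rw [Cardinal.mk_arrow]
      simp [Cardinal.aleph0_power_aleph0]
    calc Cardinal.mk Y ≤ Cardinal.continuum := hcard
      _ = Cardinal.mk (ℕ → ℕ) := h1.symm
      _ ≤ Cardinal.mk (Quotient E0) := Cardinal.mk_le_of_injective hinj
  obtain ⟨emb⟩ := Cardinal.le_def _ _ |>.1 hle
  refine ⟨Function.invFun emb ∘ Quotient.mk E0, ?_, ?_⟩
  · intro y
    obtain ⟨q, hq⟩ := Function.invFun_surjective emb.injective y
    obtain ⟨r, rfl⟩ := Quotient.exists_rep q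
    exact ⟨r, hq⟩
  · intro r s h
    have : Quotient.mk E0 r = Quotient.mk E0 s := Quotient.sound h
    simp [Function.comp, this]

lemma mem_closure_of_restrict (S : Set (ℕ → ℕ)) (q : ℕ → ℕ)
    (h : ∀ n : ℕ, ∃ p ∈ S, ∀ i < n, p i = q i) : q ∈ closure S := by
  rw [mem_closure_iff]
  intro U hU hq
  obtain ⟨I, u, hu, hsub⟩ := isOpen_pi_iff.1 hU q hq
  obtain ⟨p, hpS, hp⟩ := h ((I.sup id) + 1)
  refine ⟨p, hsub fun i hi => ?_, hpS⟩
  have hiI : i ∈ I := hi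
  rw [hp i (Nat.lt_succ_of_le (Finset.le_sup (f := id) hiI))]
  exact (hu i hiI).2

end AuxForStatement17

/-- If |X| ≤ 2^ℵ₀ and there is a complete π-base Souslin scheme on X
covering X, then there is one that moreover has a selector. -/
theorem statement17 {X : Type} [TopologicalSpace X]
    (hcard : Cardinal.mk X ≤ Cardinal.continuum)
    (h : ∃ V : List ℕ → Set X, IsPiBaseScheme V ∧ Complete V ∧ Covers V Set.univ) :
    ∃ V : List ℕ → Set X, IsPiBaseScheme V ∧ Complete V ∧ Covers V Set.univ ∧
      ∃ f : (ℕ → ℕ) → X, IsSelector V f := by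
  classical
  obtain ⟨V, ⟨hVo, hVn⟩, hVc, hVcov⟩ := h
  set W : List ℕ → Set X := fun a => V (ev a) with hWdef
  have hWcov : Covers W Set.univ := covers_ev hVcov
  have hWo : OpenScheme W := fun a => hVo (ev a)
  have hWn : IsPiNetScheme W := pinet_ev hVn
  have hfr : ∀ p : ℕ → ℕ, fruit W p = fruit V (fun i => p (2 * i)) := fruit_ev hVcov
  have hWc : Complete W := fun p => by rw [hfr p]; exact hVc _
  have hXne : Nonempty X := ⟨(hVc (fun _ => 0)).some⟩
  obtain ⟨c, hcsurj, hcinv⟩ := exists_E0_surjection X hcard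
  set f : (ℕ → ℕ) → X := fun p =>
    if hx : c (fun i => p (2 * i + 1)) ∈ fruit W p then c (fun i => p (2 * i + 1))
    else (hWc p).some with hfdef
  have hf_mem : ∀ p, f p ∈ fruit W p := by
    intro p
    rw [hfdef]
    dsimp only
    split_ifs with hx
    · exact hx
    · exact (hWc p).some_mem
  have hflesh : flesh W = Set.univ := by
    apply Set.eq_univ_of_univ_subset
    rw [← hWcov.1]
    exact Set.subset_iUnion (fun a => W a) []
  -- key: given x, a branch q with x ∈ fruit W q, and a prefix length n, we can find p
  -- agreeing with q below 2*n such that f p = x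
  have hkey : ∀ (x : X) (q : ℕ → ℕ), x ∈ fruit W q → ∀ n : ℕ,
      ∃ p : ℕ → ℕ, f p = x ∧ ∀ m < 2 * n, p m = q m := by
    intro x q hq n
    obtain ⟨r, hr⟩ := hcsurj x
    set p : ℕ → ℕ := fun m =>
      if m % 2 = 0 then q m else if m < 2 * n then q m else r ((m - 1) / 2) with hpdef
    have hπ : (fun i => p (2 * i)) = fun i => q (2 * i) := by
      funext i
      have h2 : (2 * i) % 2 = 0 := by omega
      simp [hpdef, h2]
    have hxp : x ∈ fruit W p := by
      rw [hfr, hπ, ← hfr]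
      exact hq
    have hco : c (fun i => p (2 * i + 1)) = x := by
      rw [← hr]
      apply hcinv
      refine ⟨n, fun i hi => ?_⟩
      have h2 : ¬ (2 * i + 1) % 2 = 0 := by omega
      have h3 : ¬ (2 * i + 1 < 2 * n) := by omega
      have h4 : (2 * i + 1 - 1) / 2 = i := by omega
      simp [hpdef, h2, h3, h4]
    refine ⟨p, ?_, ?_⟩
    · rw [hfdef]
      dsimp only
      rw [dif_pos (by rw [hco]; exact hxp)]
      exact hco
    · intro m hm
      by_cases h2 : m % 2 = 0 <;> simp [hpdef, h2, hm]
  have hsurj : Function.Surjective f := by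
    intro x
    obtain ⟨q0, hq0⟩ := exists_branch hVcov x
    obtain ⟨q, hq⟩ : ∃ q : ℕ → ℕ, x ∈ fruit W q := by
      refine ⟨fun m => q0 (m / 2), ?_⟩
      rw [hfr]
      have : (fun i => q0 (2 * i / 2)) = q0 := by
        funext i
        congr 1
        omega
      simpa [this] using hq0
    obtain ⟨p, hp, -⟩ := hkey x q hq 0
    exact ⟨p, hp⟩
  refine ⟨W, ⟨hWo, hWn⟩, hWc, hWcov, f, ?_, ?_⟩
  · rw [hflesh]
    exact Set.range_eq_univ.2 hsurj
  · intro x _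
    constructor
    · intro p hp
      have : f p = x := hp
      exact this ▸ hf_mem p
    · intro q hq
      apply mem_closure_of_restrict
      intro n
      obtain ⟨p, hp, hagree⟩ := hkey x q hq n
      exact ⟨p, hp, fun i hi => hagree i (by omega)⟩
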